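/- arXiv:1902.00979 — 9 statements merged into one kernel-verified Lean document; each statement's English description precedes it below -/
import Mathlib

section
/- If a continuous function y : ℝ³ → ℝ³ satisfies ∇y = F₁ a.e. on the half-space {x · m < 0} and ∇y = F₂ a.e. on {x · m > 0} for a unit vector m and matrices F₁, F₂, then F₁ - F₂ = b ⊗ m for some vector b ∈ ℝ³. -/
/-!
On each open half-space `g x = y x - Fᵢ x` is Lipschitz with vanishing derivative almost
everywhere, hence constant. To see this, test against a smooth compactly supported `φ`: by the
dominated convergence lemma behind Rademacher's theorem, `s ↦ ∫ g (x + s • v) * φ x` has right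
derivative `∫ ∂ᵥg (x + s • v) * φ x = 0`, so translating `g` does not change its integrals
against `φ`, and the fundamental lemma of the calculus of variations makes `g (· + v) - g`
vanish. By continuity both constants persist up to the interface `x ⬝ m = 0`, where evaluating
at `0` shows that they agree. Hence `F₁ x = F₂ x` on `m⊥`, which forces
`F₁ - F₂ = ((F₁ - F₂) m) ⊗ m`.
-/

open Matrix MeasureTheory
open Set Filter Topology

theorem lineDeriv_comp_add_const {E F : Type*} [NormedAddCommGroup E] [NormedSpace ℝ E]
    [NormedAddCommGroup F] [NormedSpace ℝ F] (f : E → F) (c x v : E) :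
    lineDeriv ℝ (fun y => f (y + c)) x v = lineDeriv ℝ f (x + c) v := by
  simp only [lineDeriv, add_right_comm]

theorem mem_closure_of_forall_add_smul_mem {E : Type*} [TopologicalSpace E] [AddCommGroup E]
    [Module ℝ E] [ContinuousAdd E] [ContinuousSMul ℝ E] {U : Set E} {x w : E}
    (h : ∀ t : ℝ, 0 < t → x + t • w ∈ U) : x ∈ closure U := by
  refine mem_closure_of_tendsto (b := 𝓝[>] (0 : ℝ)) ?_ (eventually_nhdsWithin_of_forall h)
  exact ((continuous_const.add (continuous_id.smul continuous_const)).tendsto' 0 x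
    (by simp)).mono_left nhdsWithin_le_nhds

theorem Matrix.eq_vecMulVec_of_mulVec_eq_zero {l n R : Type*} [Fintype n] [CommRing R]
    {A : Matrix l n R} {m : n → R} (hm : m ⬝ᵥ m = 1) (h : ∀ x, x ⬝ᵥ m = 0 → A *ᵥ x = 0) :
    A = vecMulVec (A *ᵥ m) m := by
  refine ext_iff_mulVec.2 fun x => ?_
  have hx : (x - (x ⬝ᵥ m) • m) ⬝ᵥ m = 0 := by
    rw [sub_dotProduct, smul_dotProduct, hm, smul_eq_mul, mul_one, sub_self]
  have hAx := h _ hx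
  rw [mulVec_sub, mulVec_smul, sub_eq_zero] at hAx
  rw [hAx, vecMulVec_mulVec, op_smul_eq_smul, dotProduct_comm]

section

variable {E : Type*} [NormedAddCommGroup E] [NormedSpace ℝ E] [MeasurableSpace E]
  [BorelSpace E] {μ : Measure E}

theorem continuous_integral_comp_add_smul_mul [SecondCountableTopology E]
    [IsLocallyFiniteMeasure μ] {f g : E → ℝ} (hf : Continuous f) (hg : Continuous g)
    (hgs : HasCompactSupport g) (v : E) :
    Continuous (fun s : ℝ => ∫ x, f (x + s • v) * g x ∂μ) := by
  have hsupp : ∀ s : ℝ, ∀ x ∉ tsupport g, f (x + s • v) * g x = 0 := fun s x hx => by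
    rw [image_eq_zero_of_notMem_tsupport hx, mul_zero]
  rw [funext fun s => (setIntegral_eq_integral_of_forall_compl_eq_zero (hsupp s)).symm]
  exact continuous_parametric_integral_of_continuous
    ((hf.comp (continuous_snd.add (continuous_fst.smul continuous_const))).mul
      (hg.comp continuous_snd)) hgs

variable [FiniteDimensional ℝ E] [μ.IsAddHaarMeasure] {C : NNReal} {f g : E → ℝ}

namespace LipschitzWith

theorem hasDerivWithinAt_integral_comp_add_smul_mul (hf : LipschitzWith C f)
    (hg : Continuous g) (hgs : HasCompactSupport g) (v : E) (t : ℝ) :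
    HasDerivWithinAt (fun s => ∫ x, f (x + s • v) * g x ∂μ)
      (∫ x, lineDeriv ℝ f (x + t • v) v * g x ∂μ) (Ioi t) t := by
  have hft : LipschitzWith C (fun x => f (x + t • v)) := by
    simpa [Function.comp_def] using hf.comp (isometry_add_right (t • v)).lipschitz
  have hint : ∀ s : ℝ, Integrable (fun x => f (x + s • v) * g x) μ := fun s =>
    ((hf.continuous.comp (continuous_add_const _)).mul hg).integrable_of_hasCompactSupport
      hgs.mul_left
  have hslope := hft.integral_inv_smul_sub_mul_tendsto_integral_lineDeriv_mul
    (μ := μ) (hg.integrable_of_hasCompactSupport hgs) v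
  simp only [lineDeriv_comp_add_const] at hslope
  have hshift : Tendsto (· - t) (𝓝[>] t) (𝓝[>] 0) := tendsto_nhdsWithin_iff.2
    ⟨((continuous_sub_right t).tendsto' t 0 (sub_self t)).mono_left nhdsWithin_le_nhds,
      eventually_nhdsWithin_of_forall fun _ hs => sub_pos.2 (mem_Ioi.1 hs)⟩
  rw [hasDerivWithinAt_iff_tendsto_slope' (s := Ioi t) (lt_irrefl t)]
  refine (hslope.comp hshift).congr fun s => ?_
  have hs : ∀ x : E, x + (s - t) • v + t • v = x + s • v := fun x => by
    rw [add_assoc, ← add_smul, sub_add_cancel]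
  simp only [Function.comp_apply, hs, slope_def_field, smul_eq_mul, mul_assoc, integral_const_mul,
    sub_mul, integral_sub (hint s) (hint t)]
  ring

theorem integral_comp_add_mul_eq_of_ae_lineDeriv_eq_zero (hf : LipschitzWith C f)
    (hg : Continuous g) (hgs : HasCompactSupport g) {U : Set E} {v : E}
    (hU : ∀ s ∈ Icc (0 : ℝ) 1, ∀ x ∈ tsupport g, x + s • v ∈ U)
    (hd : ∀ᵐ x ∂μ, x ∈ U → lineDeriv ℝ f x v = 0) :
    ∫ x, f (x + v) * g x ∂μ = ∫ x, f x * g x ∂μ := by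
  have hderiv : ∀ t ∈ Ico (0 : ℝ) 1,
      HasDerivWithinAt (fun s => ∫ x, f (x + s • v) * g x ∂μ) 0 (Ici t) t := by
    intro t ht
    have hd' : ∀ᵐ x ∂μ, x + t • v ∈ U → lineDeriv ℝ f (x + t • v) v = 0 :=
      (measurePreserving_add_right μ (t • v)).quasiMeasurePreserving.ae hd
    have hzero : ∫ x, lineDeriv ℝ f (x + t • v) v * g x ∂μ = 0 := by
      refine integral_eq_zero_of_ae ?_
      filter_upwards [hd'] with x hx
      by_cases hxg : x ∈ tsupport g
      · simp [hx (hU t (Ico_subset_Icc_self ht) x hxg)]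
      · simp [image_eq_zero_of_notMem_tsupport hxg]
    rw [← hzero, ← hasDerivWithinAt_Ioi_iff_Ici]
    exact hf.hasDerivWithinAt_integral_comp_add_smul_mul hg hgs v t
  simpa using constant_of_has_deriv_right_zero
    (continuous_integral_comp_add_smul_mul hf.continuous hg hgs v).continuousOn hderiv 1
    (right_mem_Icc.2 zero_le_one)

theorem apply_add_eq_of_ae_lineDeriv_eq_zero (hf : LipschitzWith C f) {U : Set E}
    (hU : IsOpen U) (hUc : Convex ℝ U) {v : E} (hd : ∀ᵐ x ∂μ, x ∈ U → lineDeriv ℝ f x v = 0)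
    {x : E} (hx : x ∈ U) (hxv : x + v ∈ U) : f (x + v) = f x := by
  set V := U ∩ (· + v) ⁻¹' U
  have hV : IsOpen V := hU.inter (hU.preimage (continuous_add_const v))
  have hcont : Continuous fun z => f (z + v) - f z :=
    (hf.continuous.comp (continuous_add_const v)).sub hf.continuous
  have hae : ∀ᵐ z ∂μ, z ∈ V → f (z + v) - f z = 0 := by
    refine hV.ae_eq_zero_of_integral_contDiff_smul_eq_zero
      (hcont.locallyIntegrable.locallyIntegrableOn V) fun φ hφ hφs hφV => ?_
    have hint : ∀ w : E, Integrable (fun z => f (z + w) * φ z) μ := fun w =>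
      ((hf.continuous.comp (continuous_add_const w)).mul
        hφ.continuous).integrable_of_hasCompactSupport hφs.mul_left
    have hseg : ∀ s ∈ Icc (0 : ℝ) 1, ∀ z ∈ tsupport φ, z + s • v ∈ U := fun s hs z hz =>
      hUc.add_smul_mem (hφV hz).1 (hφV hz).2 hs
    simp only [smul_eq_mul, mul_comm (φ _), sub_mul]
    rw [integral_sub (hint v) (by simpa using hint 0),
      hf.integral_comp_add_mul_eq_of_ae_lineDeriv_eq_zero hφ.continuous hφs hseg hd, sub_self]
  exact sub_eq_zero.1 <| Measure.eqOn_open_of_ae_eq (μ := μ)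
    ((ae_restrict_iff' hV.measurableSet).2 hae) hV hcont.continuousOn continuousOn_const
    ⟨hx, hxv⟩

theorem eq_of_mem_closure_of_ae_hasFDerivAt_zero {G : Type*} [NormedAddCommGroup G]
    [NormedSpace ℝ G] {f : E → G} (hf : LipschitzWith C f) {U : Set E} (hU : IsOpen U)
    (hUc : Convex ℝ U) (hd : ∀ᵐ x ∂μ, x ∈ U → HasFDerivAt f (0 : E →L[ℝ] G) x) {x x' : E}
    (hx : x ∈ closure U) (hx' : x' ∈ closure U) : f x = f x' := by
  have hconst : (f '' U).Subsingleton := by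
    rintro _ ⟨a, ha, rfl⟩ _ ⟨b, hb, rfl⟩
    refine (SeparatingDual.eq_iff_forall_dual_eq (R := ℝ)).2 fun φ => ?_
    have hd' : ∀ᵐ z ∂μ, z ∈ U → lineDeriv ℝ (φ ∘ f) z (b - a) = 0 := by
      filter_upwards [hd] with z hz hzU
      simpa using ((φ.hasFDerivAt.comp z (hz hzU)).hasLineDerivAt (b - a)).lineDeriv
    simpa using ((φ.lipschitz.comp hf).apply_add_eq_of_ae_lineDeriv_eq_zero hU hUc hd' ha
      (by simpa using hb)).symm
  exact hconst.closure (image_closure_subset_closure_image hf.continuous ⟨x, hx, rfl⟩)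
    (image_closure_subset_closure_image hf.continuous ⟨x', hx', rfl⟩)

theorem sub_apply_eq_of_ae_hasFDerivAt {G : Type*} [NormedAddCommGroup G] [NormedSpace ℝ G]
    {f : E → G} (hf : LipschitzWith C f) {U : Set E} (hU : IsOpen U) (hUc : Convex ℝ U)
    {L : E →L[ℝ] G} (hd : ∀ᵐ x ∂μ, x ∈ U → HasFDerivAt f L x) {x x' : E}
    (hx : x ∈ closure U) (hx' : x' ∈ closure U) : f x - L x = f x' - L x' := by
  refine (hf.sub L.lipschitz).eq_of_mem_closure_of_ae_hasFDerivAt_zero (μ := μ) hU hUc ?_ hx hx'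
  filter_upwards [hd] with z hz hzU
  simpa only [sub_self] using (hz hzU).fun_sub L.hasFDerivAt

end LipschitzWith

end

/-- Hadamard jump condition: if a Lipschitz map `y : ℝ³ → ℝ³` has gradient `F₁`
a.e. on the half-space `{x ⬝ m < 0}` and `F₂` a.e. on `{x ⬝ m > 0}` for a unit
vector `m`, then `F₁ - F₂ = b ⊗ m` for some `b`. -/
theorem hadamard_jump_condition
    (y : (Fin 3 → ℝ) → (Fin 3 → ℝ)) (C : NNReal) (hy : LipschitzWith C y)
    (F₁ F₂ : Matrix (Fin 3) (Fin 3) ℝ) (m : Fin 3 → ℝ) (hm : m ⬝ᵥ m = 1)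
    (h₁ : ∀ᵐ x ∂(volume : Measure (Fin 3 → ℝ)), x ⬝ᵥ m < 0 →
      HasFDerivAt y (LinearMap.toContinuousLinearMap F₁.mulVecLin) x)
    (h₂ : ∀ᵐ x ∂(volume : Measure (Fin 3 → ℝ)), 0 < x ⬝ᵥ m →
      HasFDerivAt y (LinearMap.toContinuousLinearMap F₂.mulVecLin) x) :
    ∃ b : Fin 3 → ℝ, F₁ - F₂ = vecMulVec b m := by
  have hlin : IsLinearMap ℝ (· ⬝ᵥ m) :=
    ⟨fun x z => add_dotProduct x z m, fun c x => smul_dotProduct c x m⟩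
  have hcont : Continuous (· ⬝ᵥ m) := continuous_id.dotProduct continuous_const
  have hplane : ∀ x, x ⬝ᵥ m = 0 → (F₁ - F₂) *ᵥ x = 0 := by
    intro x hx
    have e₁ := hy.sub_apply_eq_of_ae_hasFDerivAt (isOpen_lt hcont continuous_const)
      (convex_halfSpace_lt hlin 0) h₁ (x := x) (x' := 0)
      (mem_closure_of_forall_add_smul_mem (w := -m) fun t ht => by simp [hx, hm, ht])
      (mem_closure_of_forall_add_smul_mem (w := -m) fun t ht => by simp [hm, ht])
    have e₂ := hy.sub_apply_eq_of_ae_hasFDerivAt (isOpen_lt continuous_const hcont)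
      (convex_halfSpace_gt hlin 0) h₂ (x := x) (x' := 0)
      (mem_closure_of_forall_add_smul_mem (w := m) fun t ht => by simp [hx, hm, ht])
      (mem_closure_of_forall_add_smul_mem (w := m) fun t ht => by simp [hm, ht])
    simp only [map_zero, sub_zero] at e₁ e₂
    rw [sub_mulVec, sub_eq_zero]
    exact sub_right_injective (e₁.trans e₂.symm)
  exact ⟨_, eq_vecMulVec_of_mulVec_eq_zero hm hplane⟩
end

section
/- Let a₁, a₂, φ̂₁, φ̂₂, n₁, n₂, ψ₁, ψ₂ ∈ ℝ³ with rank(a₁ ⊗ n₁ - a₂ ⊗ n₂) = 2. If there exist s₁, s₂ ∈ ℝ such that rank(a₁ ⊗ n₁ - a₂ ⊗ n₂ + s₁ φ̂₁ ⊗ ψ₁ - s₂ φ̂₂ ⊗ ψ₂) ≤ 1, then at least one of the following four conditions holds: (i) φ̂₁·(a₁×a₂) = φ̂₂·(a₁×a₂) = 0; (ii) φ̂₁·(a₁×a₂) = ψ₁·(n₁×n₂) = 0; (iii) φ̂₂·(a₁×a₂) = ψ₂·(n₁×n₂) = 0; (iv) ψ₁·(n₁×n₂) = ψ₂·(n₁×n₂)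 = 0. -/
/-!
Put `c = a₁ × a₂` and `d = n₁ × n₂`, so that `A = a₁ ⊗ n₁ - a₂ ⊗ n₂` satisfies `cᵀ A = 0` and
`A d = 0`. Writing the rank-one matrix as `u ⊗ v` expresses `A` as
`u ⊗ v - s₁ φ̂₁ ⊗ ψ₁ + s₂ φ̂₂ ⊗ ψ₂`, a sum of two or three rank-one terms `xᵢ ⊗ yᵢ`.
If the rank of `A = ∑ xᵢ ⊗ yᵢ` equals the number of terms, both families `xᵢ` and `yᵢ` are
linearly independent, so `cᵀ A = ∑ (c · xᵢ) yᵢ = 0` and `A d = ∑ (yᵢ · d) xᵢ = 0` make every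
`c · xᵢ` and `yᵢ · d` vanish: with one shear this is (ii) or (iii). With one term more than the
rank, either every `c · xᵢ` vanishes, or some `c · xⱼ ≠ 0` lets the relation `cᵀ A = 0` absorb
the `j`-th term into the others, and the full-rank case kills every `yᵢ · d`: this is (i) or (iv).
-/

namespace Matrix

variable {K m n ι : Type*} [Field K] [Fintype ι]

theorem exists_eq_vecMulVec_of_rank_le_one [Fintype m] [Fintype n] {A : Matrix m n K}
    (hA : A.rank ≤ 1) :
    ∃ (u : m → K) (v : n → K), A = vecMulVec u v := by
  rw [rank_eq_finrank_span_cols] at hA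
  obtain ⟨u, hu⟩ := finrank_le_one_iff.1 hA
  choose v hv using fun j => hu ⟨A.col j, Submodule.subset_span ⟨j, rfl⟩⟩
  refine ⟨u, v, ext fun i j => ?_⟩
  have := congrFun (congrArg Subtype.val (hv j)) i
  simp only [SetLike.val_smul, Pi.smul_apply, smul_eq_mul, col_apply] at this
  rw [vecMulVec_apply, ← this, mul_comm]

theorem sum_vecMulVec_mulVec [Fintype n] (x : ι → m → K) (y : ι → n → K) (w : n → K) :
    (∑ i, vecMulVec (x i) (y i)) *ᵥ w = ∑ i, (y i ⬝ᵥ w) • x i := by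
  simp [sum_mulVec, vecMulVec_mulVec]

theorem transpose_sum_vecMulVec (x : ι → m → K) (y : ι → n → K) :
    (∑ i, vecMulVec (x i) (y i))ᵀ = ∑ i, vecMulVec (y i) (x i) := by
  simp [transpose_sum, transpose_vecMulVec]

theorem rank_sum_vecMulVec_le [Fintype m] [Fintype n] (x : ι → m → K) (y : ι → n → K) :
    (∑ i, vecMulVec (x i) (y i)).rank ≤ (Set.range x).finrank K := by
  refine Submodule.finrank_mono ?_
  rintro _ ⟨w, rfl⟩
  rw [mulVecLin_apply, sum_vecMulVec_mulVec]
  exact Submodule.sum_mem _ fun i _ => Submodule.smul_mem _ _ (Submodule.subset_span ⟨i, rfl⟩)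

theorem linearIndependent_of_rank_sum_vecMulVec_eq_card [Fintype m] [Fintype n]
    {x : ι → m → K} {y : ι → n → K}
    (hA : (∑ i, vecMulVec (x i) (y i)).rank = Fintype.card ι) : LinearIndependent K x :=
  linearIndependent_iff_card_eq_finrank_span.2 <|
    le_antisymm (hA ▸ rank_sum_vecMulVec_le x y) (finrank_range_le_card x)

theorem dotProduct_eq_zero_of_mulVec_eq_zero_of_rank_eq_card [Fintype m] [Fintype n]
    {x : ι → m → K} {y : ι → n → K} {d : n → K}
    (hA : (∑ i, vecMulVec (x i) (y i)).rank = Fintype.card ι)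
    (hd : (∑ i, vecMulVec (x i) (y i)) *ᵥ d = 0) (i : ι) : y i ⬝ᵥ d = 0 := by
  rw [sum_vecMulVec_mulVec] at hd
  have hx : LinearIndependent K x := linearIndependent_of_rank_sum_vecMulVec_eq_card (y := y) hA
  exact Fintype.linearIndependent_iff.1 hx _ hd i

theorem dotProduct_eq_zero_of_vecMul_eq_zero_of_rank_eq_card [Fintype m] [Fintype n]
    {x : ι → m → K} {y : ι → n → K} {c : m → K}
    (hA : (∑ i, vecMulVec (x i) (y i)).rank = Fintype.card ι)
    (hc : c ᵥ* ∑ i, vecMulVec (x i) (y i) = 0) (i : ι) : x i ⬝ᵥ c = 0 := by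
  rw [← mulVec_transpose, transpose_sum_vecMulVec] at hc
  rw [← rank_transpose, transpose_sum_vecMulVec] at hA
  exact dotProduct_eq_zero_of_mulVec_eq_zero_of_rank_eq_card hA hc i

theorem dotProduct_eq_zero_of_rank_sum_vecMulVec_add_one_eq_card [Fintype m] [Fintype n]
    [DecidableEq ι] {x : ι → m → K} {y : ι → n → K} {c : m → K} {d : n → K}
    (hA : (∑ i, vecMulVec (x i) (y i)).rank + 1 = Fintype.card ι)
    (hc : c ᵥ* ∑ i, vecMulVec (x i) (y i) = 0) (hd : (∑ i, vecMulVec (x i) (y i)) *ᵥ d = 0) :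
    (∀ i, x i ⬝ᵥ c = 0) ∨ ∀ i, y i ⬝ᵥ d = 0 := by
  refine or_iff_not_imp_left.2 fun hx => ?_
  obtain ⟨j, hj⟩ := not_forall.1 hx
  set A := ∑ i, vecMulVec (x i) (y i)
  -- `∑ i, (x i ⬝ᵥ c) • y i = 0` expresses `y j` through the other `y i`, absorbing the `j`-th term.
  set x' : ι → m → K := fun i => x i - (x i ⬝ᵥ c / x j ⬝ᵥ c) • x j
  have hA' : ∑ i : {i // i ≠ j}, vecMulVec (x' i) (y i) = A := by
    have hcy : ∑ i, (x i ⬝ᵥ c) • y i = 0 := by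
      rwa [← mulVec_transpose, transpose_sum_vecMulVec, sum_vecMulVec_mulVec] at hc
    have hcorr : ∑ i, vecMulVec ((x i ⬝ᵥ c / x j ⬝ᵥ c) • x j) (y i) = 0 := by
      ext a b
      have hb := congrFun hcy b
      simp only [Finset.sum_apply, Pi.smul_apply, smul_eq_mul, Pi.zero_apply] at hb
      simp only [sum_apply, vecMulVec_apply, Pi.smul_apply, smul_eq_mul, zero_apply]
      calc ∑ i, x i ⬝ᵥ c / x j ⬝ᵥ c * x j a * y i b
          = x j a / x j ⬝ᵥ c * ∑ i, (x i ⬝ᵥ c) * y i b := by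
            rw [Finset.mul_sum]; exact Finset.sum_congr rfl fun i _ => by ring
        _ = 0 := by rw [hb, mul_zero]
    have hsum : ∑ i, vecMulVec (x' i) (y i) = A := by
      simp only [x', sub_vecMulVec, Finset.sum_sub_distrib, hcorr, sub_zero, A]
    have hx'j : x' j = 0 := by simp [x', hj]
    rwa [Fintype.sum_eq_add_sum_subtype_ne _ j, hx'j, zero_vecMulVec, zero_add] at hsum
  have hcard :
      (∑ i : {i // i ≠ j}, vecMulVec (x' i) (y i)).rank = Fintype.card {i // i ≠ j} := by
    rw [hA', Fintype.card_subtype_compl, Fintype.card_subtype_eq]; omega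
  have hne : ∀ i ≠ j, y i ⬝ᵥ d = 0 := fun i hi =>
    dotProduct_eq_zero_of_mulVec_eq_zero_of_rank_eq_card hcard (hA' ▸ hd) ⟨i, hi⟩
  have hjd : (x j ⬝ᵥ c) * (y j ⬝ᵥ d) = 0 := by
    have := congrArg (c ⬝ᵥ ·) hd
    simp only [A, sum_vecMulVec_mulVec, dotProduct_sum, dotProduct_smul, dotProduct_zero] at this
    rw [Finset.sum_eq_single j (fun i _ hi => by simp [hne i hi]) (by simp)] at this
    simpa [dotProduct_comm, mul_comm] using this
  intro i
  by_cases hi : i = j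
  · subst hi; exact (mul_eq_zero.1 hjd).resolve_left hj
  · exact hne i hi

theorem dotProduct_eq_zero_of_vecMulVec_add_shear [Fintype m] [Fintype n]
    {u φ c : m → K} {v ψ d : n → K} {s : K} (hs : s ≠ 0)
    (hA : (vecMulVec u v + s • vecMulVec φ ψ).rank = 2)
    (hc : c ᵥ* (vecMulVec u v + s • vecMulVec φ ψ) = 0)
    (hd : (vecMulVec u v + s • vecMulVec φ ψ) *ᵥ d = 0) :
    φ ⬝ᵥ c = 0 ∧ ψ ⬝ᵥ d = 0 := by
  have hsum :
      vecMulVec u v + s • vecMulVec φ ψ = ∑ i, vecMulVec (![u, s • φ] i) (![v, ψ] i) := by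
    simp [Fin.sum_univ_two, smul_vecMulVec]
  rw [hsum] at hA hc hd
  have hA₂ := hA.trans (Fintype.card_fin 2).symm
  exact ⟨by simpa [hs] using dotProduct_eq_zero_of_vecMul_eq_zero_of_rank_eq_card hA₂ hc 1,
    by simpa using dotProduct_eq_zero_of_mulVec_eq_zero_of_rank_eq_card hA₂ hd 1⟩

theorem dotProduct_eq_zero_of_vecMulVec_add_two_shears [Fintype m] [Fintype n]
    {u φ₁ φ₂ c : m → K} {v ψ₁ ψ₂ d : n → K} {s₁ s₂ : K} (hs₁ : s₁ ≠ 0) (hs₂ : s₂ ≠ 0)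
    (hA : (vecMulVec u v + s₁ • vecMulVec φ₁ ψ₁ + s₂ • vecMulVec φ₂ ψ₂).rank = 2)
    (hc : c ᵥ* (vecMulVec u v + s₁ • vecMulVec φ₁ ψ₁ + s₂ • vecMulVec φ₂ ψ₂) = 0)
    (hd : (vecMulVec u v + s₁ • vecMulVec φ₁ ψ₁ + s₂ • vecMulVec φ₂ ψ₂) *ᵥ d = 0) :
    (φ₁ ⬝ᵥ c = 0 ∧ φ₂ ⬝ᵥ c = 0) ∨ (ψ₁ ⬝ᵥ d = 0 ∧ ψ₂ ⬝ᵥ d = 0) := by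
  have hsum : vecMulVec u v + s₁ • vecMulVec φ₁ ψ₁ + s₂ • vecMulVec φ₂ ψ₂ =
      ∑ i, vecMulVec (![u, s₁ • φ₁, s₂ • φ₂] i) (![v, ψ₁, ψ₂] i) := by
    simp [Fin.sum_univ_three, smul_vecMulVec, add_assoc]
  rw [hsum] at hA hc hd
  rcases dotProduct_eq_zero_of_rank_sum_vecMulVec_add_one_eq_card (by simp [hA]) hc hd with h | h
  · exact Or.inl ⟨by simpa [hs₁] using h 1, by simpa [hs₂] using h 2⟩
  · exact Or.inr ⟨h 1, h 2⟩

end Matrix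

open Matrix

/-- Lemma 4.1: necessary conditions for the rank-one compatibility of a
two-fold incompatible matrix after two simple shears. -/
theorem necessary_conditions_plastic_compatibility
    (a₁ a₂ φ₁ φ₂ n₁ n₂ ψ₁ ψ₂ : Fin 3 → ℝ)
    (hrank : (vecMulVec a₁ n₁ - vecMulVec a₂ n₂).rank = 2)
    (s₁ s₂ : ℝ)
    (h : (vecMulVec a₁ n₁ - vecMulVec a₂ n₂
        + s₁ • vecMulVec φ₁ ψ₁ - s₂ • vecMulVec φ₂ ψ₂).rank ≤ 1) :
    (φ₁ ⬝ᵥ crossProduct a₁ a₂ = 0 ∧ φ₂ ⬝ᵥ crossProduct a₁ a₂ = 0) ∨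
    (φ₁ ⬝ᵥ crossProduct a₁ a₂ = 0 ∧ ψ₁ ⬝ᵥ crossProduct n₁ n₂ = 0) ∨
    (φ₂ ⬝ᵥ crossProduct a₁ a₂ = 0 ∧ ψ₂ ⬝ᵥ crossProduct n₁ n₂ = 0) ∨
    (ψ₁ ⬝ᵥ crossProduct n₁ n₂ = 0 ∧ ψ₂ ⬝ᵥ crossProduct n₁ n₂ = 0) := by
  have hc : crossProduct a₁ a₂ ᵥ* (vecMulVec a₁ n₁ - vecMulVec a₂ n₂) = 0 := by
    simp only [vecMul_sub, vecMul_vecMulVec, dotProduct_comm _ a₁, dotProduct_comm _ a₂,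
      dot_self_cross, dot_cross_self, zero_smul, sub_self]
  have hd : (vecMulVec a₁ n₁ - vecMulVec a₂ n₂) *ᵥ crossProduct n₁ n₂ = 0 := by
    simp only [sub_mulVec, vecMulVec_mulVec, dot_self_cross, dot_cross_self, MulOpposite.op_zero,
      zero_smul, sub_self]
  obtain ⟨u, v, huv⟩ := exists_eq_vecMulVec_of_rank_le_one h
  have hA : vecMulVec a₁ n₁ - vecMulVec a₂ n₂ =
      vecMulVec u v + (-s₁) • vecMulVec φ₁ ψ₁ + s₂ • vecMulVec φ₂ ψ₂ := by
    rw [← huv, neg_smul]; abel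
  rw [hA] at hrank hc hd
  rcases eq_or_ne s₁ 0 with rfl | hs₁ <;> rcases eq_or_ne s₂ 0 with rfl | hs₂
  · simp only [neg_zero, zero_smul, add_zero] at hrank
    exact absurd (rank_vecMulVec_le u v) (by omega)
  · simp only [neg_zero, zero_smul, add_zero] at hrank hc hd
    exact Or.inr (Or.inr (Or.inl (dotProduct_eq_zero_of_vecMulVec_add_shear hs₂ hrank hc hd)))
  · simp only [zero_smul, add_zero] at hrank hc hd
    exact Or.inr (Or.inl
      (dotProduct_eq_zero_of_vecMulVec_add_shear (neg_ne_zero.2 hs₁) hrank hc hd))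
  · rcases dotProduct_eq_zero_of_vecMulVec_add_two_shears (neg_ne_zero.2 hs₁) hs₂ hrank hc hd
      with h | h
    · exact Or.inl h
    · exact Or.inr (Or.inr (Or.inr h))
end

section
/- The matrix a₁ ⊗ n₁ - a₂ ⊗ n₂ has rank 2 if and only if a₁ × a₂ ≠ 0 and n₁ × n₂ ≠ 0, given that a₁ ⊗ n₁ - a₂ ⊗ n₂ ≠ 0. In particular, rank(a₁ ⊗ n₁ - a₂ ⊗ n₂) = 2 implies a₁ × a₂ ≠ 0 and n₁ × n₂ ≠ 0. -/
/-!
Writing `∑ i, aᵢ ⊗ nᵢ` as the product of the matrix with columns `aᵢ` and the matrix with rows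
`nᵢ`, its rank is at most that of either factor, and it equals the rank of the left factor as soon
as the right one is surjective. So a sum of `k` outer products has rank `k` exactly when both
families are linearly independent, and in `K³` the linear independence of two vectors is the
nonvanishing of their cross product.
-/

open Matrix

namespace Matrix

variable {K m n ι : Type*} [Field K] [Fintype ι]

theorem rank_of_eq_card_iff_linearIndependent [Fintype n] (b : ι → n → K) :
    (of b).rank = Fintype.card ι ↔ LinearIndependent K b := by
  rw [rank_eq_finrank_span_row, linearIndependent_iff_card_eq_finrank_span, eq_comm]
  rfl

theorem rank_mul_eq_left_of_linearIndependent_row [Fintype n] (A : Matrix m ι K)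
    {B : Matrix ι n K} (hB : LinearIndependent K B.row) : (A * B).rank = A.rank := by
  have hsurj : LinearMap.range B.mulVecLin = ⊤ := Submodule.eq_top_of_finrank_eq <| by
    rw [← rank, hB.rank_matrix, Module.finrank_fintype_fun_eq_card]
  rw [rank, rank, mulVecLin_mul, LinearMap.range_comp_of_range_eq_top _ hsurj]

theorem sum_vecMulVec_eq_mul (a : ι → m → K) (b : ι → n → K) :
    ∑ i, vecMulVec (a i) (b i) = (of a)ᵀ * of b := by
  ext j l
  simp [vecMulVec_apply, mul_apply, Matrix.sum_apply]

theorem rank_sum_vecMulVec_eq_card_iff [Fintype m] [Fintype n] (a : ι → m → K) (b : ι → n → K) :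
    (∑ i, vecMulVec (a i) (b i)).rank = Fintype.card ι ↔
      LinearIndependent K a ∧ LinearIndependent K b := by
  rw [sum_vecMulVec_eq_mul, ← rank_of_eq_card_iff_linearIndependent,
    ← rank_of_eq_card_iff_linearIndependent, ← rank_transpose (of a)]
  constructor
  · intro h
    exact ⟨(rank_le_card_width _).antisymm (h ▸ rank_mul_le_left _ _),
      (rank_le_card_height _).antisymm (h ▸ rank_mul_le_right _ _)⟩
  · rintro ⟨hA, hB⟩
    have hb : LinearIndependent K (of b).row := (rank_of_eq_card_iff_linearIndependent b).mp hB
    rwa [rank_mul_eq_left_of_linearIndependent_row _ hb]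

end Matrix

theorem rank_two_iff_cross_products_ne_zero_general (a₁ a₂ n₁ n₂ : Fin 3 → ℝ) :
    ((vecMulVec a₁ n₁ - vecMulVec a₂ n₂).rank = 2 ↔
      crossProduct a₁ a₂ ≠ 0 ∧ crossProduct n₁ n₂ ≠ 0) ∧
    ((vecMulVec a₁ n₁ - vecMulVec a₂ n₂).rank = 2 →
      crossProduct a₁ a₂ ≠ 0 ∧ crossProduct n₁ n₂ ≠ 0) := by
  have hsum : vecMulVec a₁ n₁ - vecMulVec a₂ n₂ =
      ∑ i, vecMulVec (![a₁, a₂] i) (![n₁, -n₂] i) := by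
    simp [Fin.sum_univ_two, vecMulVec_neg, sub_eq_add_neg]
  have key : (vecMulVec a₁ n₁ - vecMulVec a₂ n₂).rank = 2 ↔
      crossProduct a₁ a₂ ≠ 0 ∧ crossProduct n₁ n₂ ≠ 0 := by
    have hrank := rank_sum_vecMulVec_eq_card_iff ![a₁, a₂] ![n₁, -n₂]
    rw [Fintype.card_fin] at hrank
    rw [hsum, hrank, ← crossProduct_ne_zero_iff_linearIndependent,
      ← crossProduct_ne_zero_iff_linearIndependent, map_neg, neg_ne_zero]
  exact ⟨key, key.mp⟩

/-- Given that `a₁ ⊗ n₁ - a₂ ⊗ n₂ ≠ 0`, it has rank 2 iff `a₁ × a₂ ≠ 0` and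
`n₁ × n₂ ≠ 0`. In particular rank 2 implies both cross products are nonzero. -/
theorem rank_two_iff_cross_products_ne_zero (a₁ a₂ n₁ n₂ : Fin 3 → ℝ)
    (h : vecMulVec a₁ n₁ - vecMulVec a₂ n₂ ≠ 0) :
    ((vecMulVec a₁ n₁ - vecMulVec a₂ n₂).rank = 2 ↔
      crossProduct a₁ a₂ ≠ 0 ∧ crossProduct n₁ n₂ ≠ 0) ∧
    ((vecMulVec a₁ n₁ - vecMulVec a₂ n₂).rank = 2 →
      crossProduct a₁ a₂ ≠ 0 ∧ crossProduct n₁ n₂ ≠ 0) :=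
  rank_two_iff_cross_products_ne_zero_general a₁ a₂ n₁ n₂
end

section
/- Let a₁, a₂, φ̂₁, φ̂₂, n₁, n₂ ∈ ℝ³ with rank(a₁ ⊗ n₁ - a₂ ⊗ n₂) = 2, and suppose ψ₁ = α₁n₁ + α₂n₂ and ψ₂ = β₁n₁ + β₂n₂ for scalars α₁, α₂, β₁, β₂. Assume (a₁ × a₂)·φ̂₁ ≠ 0 or (a₁ × a₂)·φ̂₂ ≠ 0. Then s₁, s₂ ∈ ℝ satisfy rank(a₁ ⊗ n₁ - a₂ ⊗ n₂ + s₁ φ̂₁ ⊗ ψ₁ - s₂ φ̂₂ ⊗ ψ₂) ≤ 1 if and only if (a₁ × a₂)·φ̂₂ = s₁ (α₂a₁ + α₁a₂)·(φ̂₁ × φ̂₂) and (a₁ × a₂)·φ̂₁ = s₂ (β₂a₁ + β₁a₂)·(φ̂₁ × φ̂₂). -/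
/-!
With `A = a₁ + s₁α₁ φ₁ - s₂β₁ φ₂` and `B = -a₂ + s₁α₂ φ₁ - s₂β₂ φ₂` the matrix is
`A ⊗ n₁ + B ⊗ n₂ = [A B] [n₁; n₂]`. The rank-2 hypothesis makes `n₁, n₂` independent, so the
right factor is onto and the rank is that of `[A B]`: it is at most one iff `A × B = 0`.
The two scalar conditions say exactly `(A × B)·φ₂ = 0` and `(A × B)·φ₁ = 0`. Conversely, they make
`A × B` orthogonal to `φ₁, φ₂, A, B`, hence to `a₁, a₂` and to whichever `φᵢ` completes `a₁, a₂`
to a basis, so `A × B = 0`.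
-/

open Matrix

section Field

variable {K : Type*} [Field K]

theorem Matrix.rank_mul_eq_left_of_rank_eq_card {m n o : Type*} [Fintype n] [Fintype o]
    (A : Matrix m n K) (B : Matrix n o K) (hB : B.rank = Fintype.card n) :
    (A * B).rank = A.rank := by
  have hsurj : LinearMap.range B.mulVecLin = ⊤ :=
    Submodule.eq_top_of_finrank_eq (by rw [Module.finrank_fintype_fun_eq_card]; exact hB)
  rw [Matrix.rank, Matrix.rank, Matrix.mulVecLin_mul, LinearMap.range_comp_of_range_eq_top _ hsurj]

theorem Matrix.vecMulVec_add_vecMulVec {R m n : Type*} [CommSemiring R]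
    (a b : m → R) (v w : n → R) :
    vecMulVec a v + vecMulVec b w = (of ![a, b])ᵀ * of ![v, w] := by
  ext i j
  simp [vecMulVec_apply, mul_apply, Fin.sum_univ_two]

theorem rank_of_pair_le_one_iff_cross_eq_zero (v w : Fin 3 → K) :
    (of ![v, w]).rank ≤ 1 ↔ v ⨯₃ w = 0 := by
  rw [← not_iff_not, ← ne_eq, crossProduct_ne_zero_iff_linearIndependent,
    linearIndependent_iff_card_eq_finrank_span, Set.finrank]
  change _ ↔ _ = Module.finrank K (Submodule.span K (Set.range (of ![v, w]).row))
  rw [← rank_eq_finrank_span_row]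
  have := (of ![v, w]).rank_le_card_height
  simp only [Fintype.card_fin] at this ⊢
  omega

theorem rank_vecMulVec_add_vecMulVec_le_one_iff (a b v w : Fin 3 → K) :
    (vecMulVec a v + vecMulVec b w).rank ≤ 1 ↔ a ⨯₃ b = 0 ∨ v ⨯₃ w = 0 := by
  rw [vecMulVec_add_vecMulVec]
  by_cases hvw : v ⨯₃ w = 0
  · simp only [hvw, or_true, iff_true]
    exact (rank_mul_le_right _ _).trans ((rank_of_pair_le_one_iff_cross_eq_zero v w).2 hvw)
  · have hrank : (of ![v, w]).rank = Fintype.card (Fin 2) :=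
      (crossProduct_ne_zero_iff_linearIndependent.1 hvw).rank_matrix
    rw [rank_mul_eq_left_of_rank_eq_card _ _ hrank, rank_transpose,
      rank_of_pair_le_one_iff_cross_eq_zero, or_iff_left hvw]

theorem eq_zero_of_dotProduct_eq_zero_of_cross_dotProduct_ne_zero {u v x w : Fin 3 → K}
    (h : u ⨯₃ v ⬝ᵥ x ≠ 0) (hu : u ⬝ᵥ w = 0) (hv : v ⬝ᵥ w = 0) (hx : x ⬝ᵥ w = 0) : w = 0 := by
  rw [dotProduct_comm, triple_product_permutation, triple_product_eq_det] at h
  refine eq_zero_of_mulVec_eq_zero h ?_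
  ext i
  fin_cases i <;> simp [mulVec, hu, hv, hx]

end Field

section Shear

variable (a₁ a₂ φ₁ φ₂ : Fin 3 → ℝ) (s₁ s₂ α₁ α₂ β₁ β₂ : ℝ)

theorem shear_cross_dotProduct_right :
    (a₁ + (s₁ * α₁) • φ₁ - (s₂ * β₁) • φ₂) ⨯₃ (-a₂ + (s₁ * α₂) • φ₁ - (s₂ * β₂) • φ₂) ⬝ᵥ φ₂
      = s₁ * ((α₂ • a₁ + α₁ • a₂) ⬝ᵥ φ₁ ⨯₃ φ₂) - a₁ ⨯₃ a₂ ⬝ᵥ φ₂ := by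
  simp only [cross_apply, vec3_dotProduct, Pi.add_apply, Pi.sub_apply, Pi.neg_apply, Pi.smul_apply,
    smul_eq_mul, cons_val]
  ring

theorem shear_cross_dotProduct_left :
    (a₁ + (s₁ * α₁) • φ₁ - (s₂ * β₁) • φ₂) ⨯₃ (-a₂ + (s₁ * α₂) • φ₁ - (s₂ * β₂) • φ₂) ⬝ᵥ φ₁
      = s₂ * ((β₂ • a₁ + β₁ • a₂) ⬝ᵥ φ₁ ⨯₃ φ₂) - a₁ ⨯₃ a₂ ⬝ᵥ φ₁ := by
  simp only [cross_apply, vec3_dotProduct, Pi.add_apply, Pi.sub_apply, Pi.neg_apply, Pi.smul_apply,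
    smul_eq_mul, cons_val]
  ring

theorem shear_cross_eq_zero_iff (hφ : a₁ ⨯₃ a₂ ⬝ᵥ φ₁ ≠ 0 ∨ a₁ ⨯₃ a₂ ⬝ᵥ φ₂ ≠ 0) :
    (a₁ + (s₁ * α₁) • φ₁ - (s₂ * β₁) • φ₂) ⨯₃ (-a₂ + (s₁ * α₂) • φ₁ - (s₂ * β₂) • φ₂) = 0 ↔
      a₁ ⨯₃ a₂ ⬝ᵥ φ₂ = s₁ * ((α₂ • a₁ + α₁ • a₂) ⬝ᵥ φ₁ ⨯₃ φ₂) ∧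
      a₁ ⨯₃ a₂ ⬝ᵥ φ₁ = s₂ * ((β₂ • a₁ + β₁ • a₂) ⬝ᵥ φ₁ ⨯₃ φ₂) := by
  set A := a₁ + (s₁ * α₁) • φ₁ - (s₂ * β₁) • φ₂
  set B := -a₂ + (s₁ * α₂) • φ₁ - (s₂ * β₂) • φ₂
  have h₂ := shear_cross_dotProduct_right a₁ a₂ φ₁ φ₂ s₁ s₂ α₁ α₂ β₁ β₂
  have h₁ := shear_cross_dotProduct_left a₁ a₂ φ₁ φ₂ s₁ s₂ α₁ α₂ β₁ β₂
  constructor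
  · intro hAB
    rw [hAB, zero_dotProduct] at h₁ h₂
    exact ⟨by linear_combination h₂, by linear_combination h₁⟩
  rintro ⟨e₂, e₁⟩
  have hφ₁ : φ₁ ⬝ᵥ A ⨯₃ B = 0 := by rw [dotProduct_comm]; linear_combination h₁ - e₁
  have hφ₂ : φ₂ ⬝ᵥ A ⨯₃ B = 0 := by rw [dotProduct_comm]; linear_combination h₂ - e₂
  have hA := dot_self_cross A B
  have hB := dot_cross_self A B
  generalize A ⨯₃ B = w at hφ₁ hφ₂ hA hB ⊢
  have ha₁ : a₁ ⬝ᵥ w = 0 := by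
    simpa only [A, add_dotProduct, sub_dotProduct, smul_dotProduct, hφ₁, hφ₂, smul_zero,
      add_zero, sub_zero] using hA
  have ha₂ : a₂ ⬝ᵥ w = 0 := by
    simpa only [B, add_dotProduct, sub_dotProduct, neg_dotProduct, smul_dotProduct, hφ₁, hφ₂,
      smul_zero, add_zero, sub_zero, neg_eq_zero] using hB
  rcases hφ with h | h
  · exact eq_zero_of_dotProduct_eq_zero_of_cross_dotProduct_ne_zero h ha₁ ha₂ hφ₁
  · exact eq_zero_of_dotProduct_eq_zero_of_cross_dotProduct_ne_zero h ha₁ ha₂ hφ₂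

end Shear

/-- Proposition 4.2, first case: characterisation of the shear amounts `s₁, s₂`
achieving rank-one compatibility when both slip-plane normals lie in the span
of `n₁, n₂`. -/
theorem shear_amounts_characterisation
    (a₁ a₂ φ₁ φ₂ n₁ n₂ ψ₁ ψ₂ : Fin 3 → ℝ) (α₁ α₂ β₁ β₂ : ℝ)
    (hrank : (vecMulVec a₁ n₁ - vecMulVec a₂ n₂).rank = 2)
    (hψ₁ : ψ₁ = α₁ • n₁ + α₂ • n₂) (hψ₂ : ψ₂ = β₁ • n₁ + β₂ • n₂)
    (hφ : crossProduct a₁ a₂ ⬝ᵥ φ₁ ≠ 0 ∨ crossProduct a₁ a₂ ⬝ᵥ φ₂ ≠ 0)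
    (s₁ s₂ : ℝ) :
    (vecMulVec a₁ n₁ - vecMulVec a₂ n₂
        + s₁ • vecMulVec φ₁ ψ₁ - s₂ • vecMulVec φ₂ ψ₂).rank ≤ 1 ↔
    (crossProduct a₁ a₂ ⬝ᵥ φ₂ = s₁ * ((α₂ • a₁ + α₁ • a₂) ⬝ᵥ crossProduct φ₁ φ₂) ∧
     crossProduct a₁ a₂ ⬝ᵥ φ₁ = s₂ * ((β₂ • a₁ + β₁ • a₂) ⬝ᵥ crossProduct φ₁ φ₂)) := by
  have hn : n₁ ⨯₃ n₂ ≠ 0 := by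
    intro hn
    rw [sub_eq_add_neg, ← neg_vecMulVec] at hrank
    have := (rank_vecMulVec_add_vecMulVec_le_one_iff a₁ (-a₂) n₁ n₂).2 (Or.inr hn)
    omega
  have hM : vecMulVec a₁ n₁ - vecMulVec a₂ n₂ + s₁ • vecMulVec φ₁ ψ₁ - s₂ • vecMulVec φ₂ ψ₂
      = vecMulVec (a₁ + (s₁ * α₁) • φ₁ - (s₂ * β₁) • φ₂) n₁
        + vecMulVec (-a₂ + (s₁ * α₂) • φ₁ - (s₂ * β₂) • φ₂) n₂ := by
    subst hψ₁ hψ₂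
    ext i j
    simp only [vecMulVec_apply, Matrix.add_apply, Matrix.sub_apply, Matrix.smul_apply,
      Pi.add_apply, Pi.sub_apply, Pi.neg_apply, Pi.smul_apply, smul_eq_mul]
    ring
  rw [hM, rank_vecMulVec_add_vecMulVec_le_one_iff, or_iff_left hn]
  exact shear_cross_eq_zero_iff a₁ a₂ φ₁ φ₂ s₁ s₂ α₁ α₂ β₁ β₂ hφ
end

section
/- Let η₁, η₂ > 0 with η₁ ≠ η₂, let U₁ = diag(η₁, η₂, η₃) and U₂ = diag(η₂, η₁, η₃) for some η₃ > 0, let e₁, e₂ be the first two standard basis vectors, and set b₁ = (√2(η₁−η₂)/(η₁+η₂))(−η₁e₁ + η₂e₂), m₁ = (e₁+e₂)/√2, b₂ = (√(η₁²+η₂²)(η₁−η₂)/(η₁+η₂))(e₁+e₂), m₂ = (η₂e₁ − η₁e₂)/√(η₁²+η₂²). Then U₁ + b₁ ⊗ m₁ − U₂ = b₂ ⊗ m₂. -/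
/-!
With `c = (η₁ - η₂) / (η₁ + η₂)`, `p = -η₁ e₁ + η₂ e₂`, `q = e₁ + e₂`, `r = η₂ e₁ - η₁ e₂`, the
square roots cancel in both outer products, so `b₁ ⊗ m₁ = c p ⊗ q` and `b₂ ⊗ m₂ = c q ⊗ r`.
By bilinearity `q ⊗ r - p ⊗ q = (η₁ + η₂)(e₁ ⊗ e₁ - e₂ ⊗ e₂)`, while
`U₁ - U₂ = (η₁ - η₂)(e₁ ⊗ e₁ - e₂ ⊗ e₂)`.
-/

open Matrix

theorem vecMulVec_smul_smul {R m n : Type*} [CommSemiring R] (a b : R) (x : m → R) (y : n → R) :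
    vecMulVec (a • x) (b • y) = (a * b) • vecMulVec x y := by
  rw [smul_vecMulVec, vecMulVec_smul, smul_smul]

theorem vecMulVec_sum_sub_vecMulVec {R n : Type*} [CommRing R] (η₁ η₂ : R) (e₁ e₂ : n → R) :
    vecMulVec (e₁ + e₂) (η₂ • e₁ - η₁ • e₂) - vecMulVec (-η₁ • e₁ + η₂ • e₂) (e₁ + e₂) =
      (η₁ + η₂) • (vecMulVec e₁ e₁ - vecMulVec e₂ e₂) := by
  simp only [add_vecMulVec, vecMulVec_add, vecMulVec_sub, smul_vecMulVec, vecMulVec_smul]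
  module

theorem diagonal_sub_diagonal_swap {R : Type*} [CommRing R] (η₁ η₂ η₃ : R) :
    diagonal ![η₁, η₂, η₃] - diagonal ![η₂, η₁, η₃] =
      (η₁ - η₂) • (vecMulVec ![1, 0, 0] ![1, 0, 0] - vecMulVec ![0, 1, 0] ![0, 1, 0]) := by
  ext i j
  fin_cases i <;> fin_cases j <;> simp

theorem remark_counterexample_identity_general (η₁ η₂ η₃ : ℝ)
    (h₁ : 0 < η₁) (h₂ : 0 < η₂)
    (U₁ U₂ : Matrix (Fin 3) (Fin 3) ℝ)
    (hU₁ : U₁ = Matrix.diagonal ![η₁, η₂, η₃])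
    (hU₂ : U₂ = Matrix.diagonal ![η₂, η₁, η₃])
    (e₁ e₂ : Fin 3 → ℝ) (he₁ : e₁ = ![1, 0, 0]) (he₂ : e₂ = ![0, 1, 0])
    (b₁ m₁ b₂ m₂ : Fin 3 → ℝ)
    (hb₁ : b₁ = (Real.sqrt 2 * (η₁ - η₂) / (η₁ + η₂)) • (-η₁ • e₁ + η₂ • e₂))
    (hm₁ : m₁ = (Real.sqrt 2)⁻¹ • (e₁ + e₂))
    (hb₂ : b₂ = (Real.sqrt (η₁ ^ 2 + η₂ ^ 2) * (η₁ - η₂) / (η₁ + η₂)) • (e₁ + e₂))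
    (hm₂ : m₂ = (Real.sqrt (η₁ ^ 2 + η₂ ^ 2))⁻¹ • (η₂ • e₁ - η₁ • e₂)) :
    U₁ + vecMulVec b₁ m₁ - U₂ = vecMulVec b₂ m₂ := by
  have hsum : η₁ + η₂ ≠ 0 := by positivity
  set c := (η₁ - η₂) / (η₁ + η₂) with hc
  have sqrt_cancel : ∀ s : ℝ, 0 < s → √s * (η₁ - η₂) / (η₁ + η₂) * (√s)⁻¹ = c :=
    fun s hs => by rw [hc]; field_simp [(Real.sqrt_pos.mpr hs).ne']
  have hU : U₁ - U₂ = (η₁ - η₂) • (vecMulVec e₁ e₁ - vecMulVec e₂ e₂) := by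
    subst hU₁ hU₂ he₁ he₂
    exact diagonal_sub_diagonal_swap η₁ η₂ η₃
  have hbm₁ : vecMulVec b₁ m₁ = c • vecMulVec (-η₁ • e₁ + η₂ • e₂) (e₁ + e₂) := by
    rw [hb₁, hm₁, vecMulVec_smul_smul, sqrt_cancel 2 two_pos]
  have hbm₂ : vecMulVec b₂ m₂ = c • vecMulVec (e₁ + e₂) (η₂ • e₁ - η₁ • e₂) := by
    rw [hb₂, hm₂, vecMulVec_smul_smul, sqrt_cancel _ (by positivity)]
  have key : c • (vecMulVec (e₁ + e₂) (η₂ • e₁ - η₁ • e₂) -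
      vecMulVec (-η₁ • e₁ + η₂ • e₂) (e₁ + e₂)) =
        (η₁ - η₂) • (vecMulVec e₁ e₁ - vecMulVec e₂ e₂) := by
    rw [vecMulVec_sum_sub_vecMulVec, smul_smul, hc, div_mul_cancel₀ _ hsum]
  rw [hbm₁, hbm₂]
  linear_combination (norm := module) hU - key

/-- The rank-one identity `U₁ + b₁ ⊗ m₁ − U₂ = b₂ ⊗ m₂` from Remark 3.6. -/
theorem remark_counterexample_identity (η₁ η₂ η₃ : ℝ)
    (h₁ : 0 < η₁) (h₂ : 0 < η₂) (h₃ : 0 < η₃) (hne : η₁ ≠ η₂)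
    (U₁ U₂ : Matrix (Fin 3) (Fin 3) ℝ)
    (hU₁ : U₁ = Matrix.diagonal ![η₁, η₂, η₃])
    (hU₂ : U₂ = Matrix.diagonal ![η₂, η₁, η₃])
    (e₁ e₂ : Fin 3 → ℝ) (he₁ : e₁ = ![1, 0, 0]) (he₂ : e₂ = ![0, 1, 0])
    (b₁ m₁ b₂ m₂ : Fin 3 → ℝ)
    (hb₁ : b₁ = (Real.sqrt 2 * (η₁ - η₂) / (η₁ + η₂)) • (-η₁ • e₁ + η₂ • e₂))
    (hm₁ : m₁ = (Real.sqrt 2)⁻¹ • (e₁ + e₂))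
    (hb₂ : b₂ = (Real.sqrt (η₁ ^ 2 + η₂ ^ 2) * (η₁ - η₂) / (η₁ + η₂)) • (e₁ + e₂))
    (hm₂ : m₂ = (Real.sqrt (η₁ ^ 2 + η₂ ^ 2))⁻¹ • (η₂ • e₁ - η₁ • e₂)) :
    U₁ + vecMulVec b₁ m₁ - U₂ = vecMulVec b₂ m₂ :=
  remark_counterexample_identity_general η₁ η₂ η₃ h₁ h₂ U₁ U₂ hU₁ hU₂ e₁ e₂ he₁ he₂ b₁ m₁ b₂ m₂ hb₁
    hm₁ hb₂ hm₂
end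

section
/- With U₁, b₁, m₁ as in the previous context (U₁ = diag(η₁,η₂,η₃), b₁ = (√2(η₁−η₂)/(η₁+η₂))(−η₁e₁+η₂e₂), m₁ = (e₁+e₂)/√2), the matrix B = U₁ + b₁ ⊗ m₁ satisfies det B = det U₁ and |B(e₁ ± e₂)|² ≤ η₁² + η₂² for all η₁, η₂ > 0. -/
/-!
Write `U₁ = diag(η₁, η₂, η₃)` and `d = (η₁ - η₂)/(η₁ + η₂)`. The vector `b₁` is `U₁ w` with
`w = √2 d (e₂ - e₁)` orthogonal to `m₁`, so `B = U₁ (1 + w ⊗ m₁)` and the matrix determinant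
lemma gives `det B = det U₁ (1 + m₁ ⬝ w) = det U₁`. Likewise `m₁ ⊥ e₁ - e₂`, so
`B (e₁ - e₂) = U₁ (e₁ - e₂)`, of squared length exactly `η₁² + η₂²`. Finally
`B (e₁ + e₂) = (η₁ (1 - 2d), η₂ (1 + 2d), 0)`, whose squared length falls short of
`η₁² + η₂²` by `8 η₁ η₂ d²`.
-/

open Matrix

namespace Matrix

variable {n R : Type*} [Fintype n]

theorem det_add_vecMulVec_mulVec [DecidableEq n] [CommRing R] (A : Matrix n n R) (w v : n → R) :
    (A + vecMulVec (A *ᵥ w) v).det = A.det * (1 + v ⬝ᵥ w) := by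
  rw [← mul_vecMulVec, ← mul_one_add, det_mul, vecMulVec_eq Unit,
    det_one_add_replicateCol_mul_replicateRow]

theorem add_vecMulVec_mulVec [CommSemiring R] (A : Matrix n n R) (u v x : n → R) :
    (A + vecMulVec u v) *ᵥ x = A *ᵥ x + (v ⬝ᵥ x) • u := by
  rw [add_mulVec, vecMulVec_mulVec, op_smul_eq_smul]

end Matrix

theorem sq_mul_one_sub_add_sq_mul_one_add_le {K : Type*} [Field K] [LinearOrder K]
    [IsStrictOrderedRing K] {a b : K} (hab : 0 ≤ a * b) :
    (a * (1 - 2 * ((a - b) / (a + b)))) ^ 2 + (b * (1 + 2 * ((a - b) / (a + b)))) ^ 2 ≤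
      a ^ 2 + b ^ 2 := by
  rcases eq_or_ne (a + b) 0 with hs | hs
  · simp [hs]
  have deficit : a ^ 2 + b ^ 2 - ((a * (1 - 2 * ((a - b) / (a + b)))) ^ 2 +
      (b * (1 + 2 * ((a - b) / (a + b)))) ^ 2) = 8 * (a * b) * ((a - b) / (a + b)) ^ 2 := by
    field_simp
    ring
  linarith [mul_nonneg (mul_nonneg (by norm_num : (0 : K) ≤ 8) hab) (sq_nonneg ((a - b) / (a + b)))]

theorem dolzmann_conditions_general (η₁ η₂ η₃ : ℝ)
    (h₁ : 0 < η₁) (h₂ : 0 < η₂)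
    (U₁ : Matrix (Fin 3) (Fin 3) ℝ) (hU₁ : U₁ = Matrix.diagonal ![η₁, η₂, η₃])
    (e₁ e₂ : Fin 3 → ℝ) (he₁ : e₁ = ![1, 0, 0]) (he₂ : e₂ = ![0, 1, 0])
    (b₁ m₁ : Fin 3 → ℝ)
    (hb₁ : b₁ = (Real.sqrt 2 * (η₁ - η₂) / (η₁ + η₂)) • (-η₁ • e₁ + η₂ • e₂))
    (hm₁ : m₁ = (Real.sqrt 2)⁻¹ • (e₁ + e₂))
    (B : Matrix (Fin 3) (Fin 3) ℝ) (hB : B = U₁ + vecMulVec b₁ m₁) :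
    B.det = U₁.det ∧
    (B *ᵥ (e₁ + e₂)) ⬝ᵥ (B *ᵥ (e₁ + e₂)) ≤ η₁ ^ 2 + η₂ ^ 2 ∧
    (B *ᵥ (e₁ - e₂)) ⬝ᵥ (B *ᵥ (e₁ - e₂)) ≤ η₁ ^ 2 + η₂ ^ 2 := by
  have hm₁_add : m₁ ⬝ᵥ (e₁ + e₂) = Real.sqrt 2 := by
    subst_vars
    simp [dotProduct, Fin.sum_univ_three]
    rw [← two_mul, ← div_eq_mul_inv, Real.div_sqrt]
  have hm₁_sub : m₁ ⬝ᵥ (e₁ - e₂) = 0 := by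
    subst_vars
    simp [dotProduct, Fin.sum_univ_three]
  have hb₁_eq : b₁ = U₁ *ᵥ ((Real.sqrt 2 * (η₂ - η₁) / (η₁ + η₂)) • (e₁ - e₂)) := by
    subst_vars
    ext i
    fin_cases i <;> simp [mulVec_diagonal] <;> ring
  have hshear : (m₁ ⬝ᵥ (e₁ + e₂)) • b₁ =
      (2 * ((η₁ - η₂) / (η₁ + η₂))) • (-η₁ • e₁ + η₂ • e₂) := by
    rw [hm₁_add, hb₁, smul_smul, mul_div_assoc, ← mul_assoc, Real.mul_self_sqrt zero_le_two]
  refine ⟨?_, ?_, ?_⟩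
  · rw [hB, hb₁_eq, det_add_vecMulVec_mulVec, dotProduct_smul, hm₁_sub, smul_zero,
      add_zero, mul_one]
  · rw [hB, add_vecMulVec_mulVec, hshear]
    subst_vars
    refine (Eq.le ?_).trans (sq_mul_one_sub_add_sq_mul_one_add_le (mul_pos h₁ h₂).le)
    simp [dotProduct, Fin.sum_univ_three, mulVec_diagonal]
    ring
  · rw [hB, add_vecMulVec_mulVec, hm₁_sub, zero_smul, add_zero]
    subst_vars
    simp [dotProduct, Fin.sum_univ_three, mulVec_diagonal, sq]

/-- The matrix `B = U₁ + b₁ ⊗ m₁` of Remark 3.6 satisfies Dolzmann's conditions: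
`det B = det U₁` and `|B(e₁ ± e₂)|² ≤ η₁² + η₂²` for all `η₁, η₂ > 0`. -/
theorem dolzmann_conditions (η₁ η₂ η₃ : ℝ)
    (h₁ : 0 < η₁) (h₂ : 0 < η₂) (h₃ : 0 < η₃)
    (U₁ : Matrix (Fin 3) (Fin 3) ℝ) (hU₁ : U₁ = Matrix.diagonal ![η₁, η₂, η₃])
    (e₁ e₂ : Fin 3 → ℝ) (he₁ : e₁ = ![1, 0, 0]) (he₂ : e₂ = ![0, 1, 0])
    (b₁ m₁ : Fin 3 → ℝ)
    (hb₁ : b₁ = (Real.sqrt 2 * (η₁ - η₂) / (η₁ + η₂)) • (-η₁ • e₁ + η₂ • e₂))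
    (hm₁ : m₁ = (Real.sqrt 2)⁻¹ • (e₁ + e₂))
    (B : Matrix (Fin 3) (Fin 3) ℝ) (hB : B = U₁ + vecMulVec b₁ m₁) :
    B.det = U₁.det ∧
    (B *ᵥ (e₁ + e₂)) ⬝ᵥ (B *ᵥ (e₁ + e₂)) ≤ η₁ ^ 2 + η₂ ^ 2 ∧
    (B *ᵥ (e₁ - e₂)) ⬝ᵥ (B *ᵥ (e₁ - e₂)) ≤ η₁ ^ 2 + η₂ ^ 2 :=
  dolzmann_conditions_general η₁ η₂ η₃ h₁ h₂ U₁ hU₁ e₁ e₂ he₁ he₂ b₁ m₁ hb₁ hm₁ B hB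
end

section
/- Let R₁V₁, R₂V₂ ∈ ℝ^{3×3} with rank(R₁V₁ − R₂V₂) = 2 and cof(R₁V₁ − R₂V₂) = b̂ ⊗ m̂ with b̂ ≠ 0, m̂ ∈ S². Suppose t̄₁, t̄₂ ∈ ℝ, φ₁, ψ₁, φ₂, ψ₂ ∈ ℝ³ with φᵢ·ψᵢ = 0, and Fᵢ(s) = RᵢVᵢ(1 + s φᵢ⊗ψᵢ) satisfy F₁(t̄₁) − F₂(t̄₂) = b̄ ⊗ m for some b̄ ∈ ℝ³, m ∈ S² with m̂·m = m̂·ψ₁ = m̂·ψ₂ = 0. Then for any R ∈ SO(3) and any t₁, t₂ such that R F₁(t₁) − F₂(t₂) = b ⊗ m for some b ∈ ℝ³, the rotation axis of R must be parallel to R₁V₁m̂ (i.e., R(R₁V₁m̂) = R₁V₁m̂). -/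
open Matrix

/-! Test both rank-one connections with `m̂`: the shears `1 + t φᵢ ⊗ ψᵢ` fix
`m̂` because `ψᵢ ⊥ m̂`, and `b ⊗ m` kills `m̂` because `m ⊥ m̂`. The junction therefore gives
`R₁V₁ m̂ = R₂V₂ m̂`, and the connection with `R` gives `R R₁V₁ m̂ = R₂V₂ m̂`. -/

section

variable {n α : Type*} [Fintype n] [CommRing α]

theorem vecMulVec_mulVec_eq_zero {u v w : n → α} (h : v ⬝ᵥ w = 0) : vecMulVec u v *ᵥ w = 0 := by
  rw [vecMulVec_mulVec, h, MulOpposite.op_zero, zero_smul]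

theorem mul_one_add_smul_vecMulVec_mulVec [DecidableEq n] (A : Matrix n n α) (t : α)
    (φ : n → α) {ψ v : n → α} (h : ψ ⬝ᵥ v = 0) : (A * (1 + t • vecMulVec φ ψ)) *ᵥ v = A *ᵥ v := by
  rw [← mulVec_mulVec, add_mulVec, smul_mulVec, vecMulVec_mulVec_eq_zero h, smul_zero,
    one_mulVec, add_zero]

theorem mulVec_eq_of_sub_eq_vecMulVec {A B : Matrix n n α} {b m v : n → α}
    (h : A - B = vecMulVec b m) (hv : m ⬝ᵥ v = 0) : A *ᵥ v = B *ᵥ v := by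
  rw [← sub_eq_zero, ← sub_mulVec, h, vecMulVec_mulVec_eq_zero hv]

theorem mulVec_eq_of_shear_sub_shear_eq_vecMulVec [DecidableEq n] {A B : Matrix n n α} {s t : α}
    {φ ψ φ' ψ' b m v : n → α}
    (h : A * (1 + s • vecMulVec φ ψ) - B * (1 + t • vecMulVec φ' ψ') = vecMulVec b m)
    (hψ : ψ ⬝ᵥ v = 0) (hψ' : ψ' ⬝ᵥ v = 0) (hm : m ⬝ᵥ v = 0) : A *ᵥ v = B *ᵥ v := by
  rw [← mul_one_add_smul_vecMulVec_mulVec A s φ hψ,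
    ← mul_one_add_smul_vecMulVec_mulVec B t φ' hψ']
  exact mulVec_eq_of_sub_eq_vecMulVec h hm

end

theorem rotation_axis_forced_general
    (R₁V₁ R₂V₂ : Matrix (Fin 3) (Fin 3) ℝ)
    (mhat : Fin 3 → ℝ)
    (tb₁ tb₂ : ℝ) (φ₁ ψ₁ φ₂ ψ₂ : Fin 3 → ℝ)
    (bb m : Fin 3 → ℝ)
    (hmm : mhat ⬝ᵥ m = 0) (hmψ₁ : mhat ⬝ᵥ ψ₁ = 0) (hmψ₂ : mhat ⬝ᵥ ψ₂ = 0)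
    (hjunction : R₁V₁ * (1 + tb₁ • vecMulVec φ₁ ψ₁)
        - R₂V₂ * (1 + tb₂ • vecMulVec φ₂ ψ₂) = vecMulVec bb m)
    (R : Matrix (Fin 3) (Fin 3) ℝ)
    (t₁ t₂ : ℝ) (b : Fin 3 → ℝ)
    (hconn : R * (R₁V₁ * (1 + t₁ • vecMulVec φ₁ ψ₁))
        - R₂V₂ * (1 + t₂ • vecMulVec φ₂ ψ₂) = vecMulVec b m) :
    R *ᵥ (R₁V₁ *ᵥ mhat) = R₁V₁ *ᵥ mhat := by
  rw [dotProduct_comm] at hmm hmψ₁ hmψ₂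
  rw [← Matrix.mul_assoc] at hconn
  have hjunction_mhat : R₁V₁ *ᵥ mhat = R₂V₂ *ᵥ mhat :=
    mulVec_eq_of_shear_sub_shear_eq_vecMulVec hjunction hmψ₁ hmψ₂ hmm
  have hconn_mhat : (R * R₁V₁) *ᵥ mhat = R₂V₂ *ᵥ mhat :=
    mulVec_eq_of_shear_sub_shear_eq_vecMulVec hconn hmψ₁ hmψ₂ hmm
  rw [mulVec_mulVec, hconn_mhat, hjunction_mhat]

/-- First step in the proof of Proposition 4.3: any rotation `R` realizing a
rank-one connection `R F₁(t₁) − F₂(t₂) = b ⊗ m` must fix the vector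
`R₁V₁ m̂`, i.e. its rotation axis is parallel to `R₁V₁ m̂`. -/
theorem rotation_axis_forced
    (R₁V₁ R₂V₂ : Matrix (Fin 3) (Fin 3) ℝ)
    (hrank : (R₁V₁ - R₂V₂).rank = 2)
    (bhat mhat : Fin 3 → ℝ) (hbhat : bhat ≠ 0) (hmhat : mhat ⬝ᵥ mhat = 1)
    (hcof : (Matrix.adjugate (R₁V₁ - R₂V₂))ᵀ = vecMulVec bhat mhat)
    (tb₁ tb₂ : ℝ) (φ₁ ψ₁ φ₂ ψ₂ : Fin 3 → ℝ)
    (hor₁ : φ₁ ⬝ᵥ ψ₁ = 0) (hor₂ : φ₂ ⬝ᵥ ψ₂ = 0)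
    (bb m : Fin 3 → ℝ) (hm : m ⬝ᵥ m = 1)
    (hmm : mhat ⬝ᵥ m = 0) (hmψ₁ : mhat ⬝ᵥ ψ₁ = 0) (hmψ₂ : mhat ⬝ᵥ ψ₂ = 0)
    (hjunction : R₁V₁ * (1 + tb₁ • vecMulVec φ₁ ψ₁)
        - R₂V₂ * (1 + tb₂ • vecMulVec φ₂ ψ₂) = vecMulVec bb m)
    (R : Matrix (Fin 3) (Fin 3) ℝ) (hR : Rᵀ * R = 1) (hdetR : R.det = 1)
    (t₁ t₂ : ℝ) (b : Fin 3 → ℝ)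
    (hconn : R * (R₁V₁ * (1 + t₁ • vecMulVec φ₁ ψ₁))
        - R₂V₂ * (1 + t₂ • vecMulVec φ₂ ψ₂) = vecMulVec b m) :
    R *ᵥ (R₁V₁ *ᵥ mhat) = R₁V₁ *ᵥ mhat :=
  rotation_axis_forced_general R₁V₁ R₂V₂ mhat tb₁ tb₂ φ₁ ψ₁ φ₂ ψ₂ bb m hmm hmψ₁ hmψ₂ hjunction R t₁
    t₂ b hconn
end

section
/- Let λ ∈ (1, √2), d = 1/λ, α = d(λ²−1)/(2(d+λ)), β = −√(2(1−d²))/√(λ²−1), γ = −(λ/d)√(2(1−d²))/√(λ²−1), a₁⁺ = α(−γ, 1, 1), n₁⁺ = (β, 1, 1), and U₁ the matrix with rows (d,0,0), (0,(1+λ)/2,(λ−1)/2), (0,(λ−1)/2,(1+λ)/2). Then there exists R ∈ SO(3) such that R U₁ = 1 + a₁⁺ ⊗ n₁⁺. -/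
/-!
With `d = 1/λ` the parameters collapse to `β = -√2/λ`, `γ = -√2 λ` and
`α = (λ² - 1) / (2(λ² + 1))`. The rotation is then explicit: it is the rotation about the axis
`(0, 1, -1)` through the angle `θ` with `cos θ = 2λ/(λ² + 1)`, and orthogonality, `det R = 1`
and `R U₁ = 1 + a₁⁺ ⊗ n₁⁺` are rational identities in `λ` and `√2`.
-/

open Matrix

noncomputable def interfaceRotation (lam : ℝ) : Matrix (Fin 3) (Fin 3) ℝ :=
  (2 * (lam ^ 2 + 1))⁻¹ • !![4 * lam, √2 * (lam ^ 2 - 1), √2 * (lam ^ 2 - 1);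
    -(√2 * (lam ^ 2 - 1)), (lam + 1) ^ 2, -(lam - 1) ^ 2;
    -(√2 * (lam ^ 2 - 1)), -(lam - 1) ^ 2, (lam + 1) ^ 2]

noncomputable def orthorhombicStretch (lam : ℝ) : Matrix (Fin 3) (Fin 3) ℝ :=
  !![1 / lam, 0, 0;
     0, (1 + lam) / 2, (lam - 1) / 2;
     0, (lam - 1) / 2, (1 + lam) / 2]

lemma interfaceRotation_transpose_mul_self (lam : ℝ) :
    (interfaceRotation lam)ᵀ * interfaceRotation lam = 1 := by
  have hsqrt : √2 ^ 2 = 2 := Real.sq_sqrt zero_le_two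
  have hden : lam ^ 2 + 1 ≠ 0 := by positivity
  ext i j
  fin_cases i <;> fin_cases j <;>
    simp only [interfaceRotation, Matrix.smul_apply, transpose_apply, mul_apply,
      Fin.sum_univ_three, of_apply, cons_val, one_apply, smul_eq_mul, Fin.reduceFinMk] <;>
    field_simp <;> grind

lemma interfaceRotation_det (lam : ℝ) : (interfaceRotation lam).det = 1 := by
  have hsqrt : √2 ^ 2 = 2 := Real.sq_sqrt zero_le_two
  have hden : lam ^ 2 + 1 ≠ 0 := by positivity
  rw [interfaceRotation, det_smul, det_fin_three]
  simp only [of_apply, cons_val, Fintype.card_fin]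
  field_simp
  grind

lemma interfaceRotation_mul_orthorhombicStretch {lam : ℝ} (hlam : lam ≠ 0) :
    interfaceRotation lam * orthorhombicStretch lam =
      1 + vecMulVec (((lam ^ 2 - 1) / (2 * (lam ^ 2 + 1))) • ![√2 * lam, 1, 1])
        ![-√2 / lam, 1, 1] := by
  have hsqrt : √2 ^ 2 = 2 := Real.sq_sqrt zero_le_two
  have hden : lam ^ 2 + 1 ≠ 0 := by positivity
  ext i j
  fin_cases i <;> fin_cases j <;>
    simp only [interfaceRotation, orthorhombicStretch, Matrix.smul_apply, mul_apply,
      Fin.sum_univ_three, of_apply, cons_val, Matrix.add_apply, one_apply, vecMulVec_apply,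
      Pi.smul_apply, smul_eq_mul, Fin.reduceFinMk] <;>
    field_simp <;> grind

lemma sqrt_two_mul_one_sub_inv_sq_div {lam : ℝ} (hlam : 1 < lam) :
    √(2 * (1 - (1 / lam) ^ 2)) / √(lam ^ 2 - 1) = √2 / lam := by
  have hlam0 : 0 < lam := zero_lt_one.trans hlam
  have hsqrt : √(lam ^ 2 - 1) ≠ 0 := (Real.sqrt_pos.mpr (by nlinarith)).ne'
  rw [show 2 * (1 - (1 / lam) ^ 2) = 2 * (lam ^ 2 - 1) / lam ^ 2 by field_simp,
    Real.sqrt_div' _ (sq_nonneg lam), Real.sqrt_mul zero_le_two, Real.sqrt_sq hlam0.le]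
  field_simp

/-- The cubic-to-orthorhombic stretch tensor `U₁` with `d = 1/λ` is rank-one
connected to the identity: `R U₁ = 1 + a₁⁺ ⊗ n₁⁺` for some rotation `R`. -/
theorem austenite_martensite_rank_one
    (lam : ℝ) (hlam : lam ∈ Set.Ioo 1 (Real.sqrt 2))
    (d α β γ : ℝ)
    (hd : d = 1 / lam)
    (hα : α = d * (lam ^ 2 - 1) / (2 * (d + lam)))
    (hβ : β = -Real.sqrt (2 * (1 - d ^ 2)) / Real.sqrt (lam ^ 2 - 1))
    (hγ : γ = -(lam / d) * Real.sqrt (2 * (1 - d ^ 2)) / Real.sqrt (lam ^ 2 - 1))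
    (a n : Fin 3 → ℝ) (ha : a = α • ![-γ, 1, 1]) (hn : n = ![β, 1, 1])
    (U₁ : Matrix (Fin 3) (Fin 3) ℝ)
    (hU₁ : U₁ = !![d, 0, 0;
                   0, (1 + lam) / 2, (lam - 1) / 2;
                   0, (lam - 1) / 2, (1 + lam) / 2]) :
    ∃ R : Matrix (Fin 3) (Fin 3) ℝ,
      Rᵀ * R = 1 ∧ R.det = 1 ∧ R * U₁ = 1 + vecMulVec a n := by
  have hlam0 : lam ≠ 0 := (zero_lt_one.trans hlam.1).ne'
  have hratio := sqrt_two_mul_one_sub_inv_sq_div hlam.1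
  subst hd hU₁ ha hn
  have hα' : α = (lam ^ 2 - 1) / (2 * (lam ^ 2 + 1)) := by
    rw [hα]; field_simp; ring
  have hβ' : β = -√2 / lam := by
    rw [hβ, neg_div, hratio, neg_div]
  have hγ' : -γ = √2 * lam := by
    rw [hγ, mul_div_assoc, hratio]; field_simp
  refine ⟨interfaceRotation lam, interfaceRotation_transpose_mul_self lam,
    interfaceRotation_det lam, ?_⟩
  rw [hα', hβ', hγ']
  exact interfaceRotation_mul_orthorhombicStretch hlam0
end

section
/- Let λ ∈ (1, √2), η₁ = (2λ⁴ + 5√2λ³ + 4λ² − 5√2λ − 6)/(2(2λ⁴ + 5√2λ³ − 4λ² + 3√2λ + 2)) and η₂ = (2λ⁴ + √2λ³ − 4λ² − √2λ + 2)/(2(2λ⁴ + 5√2λ³ − 4λ² + 3√2λ + 2)). With d = 1/λ and a₁⁺, n₁⁺, a₃⁺, n₃⁺ defined via α = d(λ²−1)/(2(d+λ)), β = −√(2(1−d²))/√(λ²−1), γ = −(λ/d)√(2(1−d²))/√(λ²−1) by a₁⁺ = α(−γ,1,1), n₁⁺ = (β,1,1), a₃⁺ = α(1,−γ,1), n₃⁺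 = (1,β,1), set ψ = (−1,1,0), φ₁ = −(1,1,1), φ₂ = (1,1,−1). Then rank((1 + a₁⁺⊗n₁⁺)(1 + η₁ φ₁⊗ψ) − (1 + a₃⁺⊗n₃⁺)(1 + η₂ φ₂⊗ψ)) ≤ 1. -/
/-!
Put `μ = √2 λ`. Then `β = -2/μ`, `γ = -μ`, `α = (μ² - 2)/(2(μ² + 2))`, and `η₁, η₂` are rational
functions of `μ` as well. Each product expands as `1 + a ⊗ n + (η (φ + (n ⬝ φ) a)) ⊗ ψ`. Since
`a₁ - a₃` and `n₁ - n₃` are both multiples of `ψ`, the difference of the two products is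
`ψ ⊗ x + v ⊗ ψ` for explicit `x` and `v`. Being parallel to `ψ` imposes two conditions on `v`, which
are linear in `(η₁, η₂)`. The given `η₁, η₂` solve them, so `v = c ψ` and the difference is the
rank-one matrix `ψ ⊗ (x + c ψ)`.
-/

open Matrix

namespace Matrix

variable {R : Type*} [CommRing R] {ι : Type*}

theorem one_add_vecMulVec_mul_one_add_smul_vecMulVec [Fintype ι] [DecidableEq ι]
    (a m φ ψ : ι → R) (η : R) :
    (1 + vecMulVec a m) * (1 + η • vecMulVec φ ψ) =
      1 + vecMulVec a m + vecMulVec (η • (φ + (m ⬝ᵥ φ) • a)) ψ := by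
  simp only [mul_add, add_mul, one_mul, mul_one, Matrix.mul_smul, vecMulVec_mul_vecMulVec,
    smul_add, add_vecMulVec, smul_vecMulVec, vecMulVec_smul]

theorem vecMulVec_sub_vecMulVec_of_sub_eq_smul {a b m p u : ι → R} {s t : R}
    (ha : a - b = s • u) (hm : m - p = t • u) :
    vecMulVec a m - vecMulVec b p = vecMulVec u (s • m) + vecMulVec (t • b) u := by
  rw [sub_eq_iff_eq_add] at ha hm
  subst ha hm
  simp only [add_vecMulVec, vecMulVec_add, smul_vecMulVec, vecMulVec_smul]
  module

theorem rank_junction_le_one [StrongRankCondition R] [Fintype ι] [DecidableEq ι]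
    {a₁ n₁ a₃ n₃ φ₁ φ₂ ψ : ι → R} {η₁ η₂ s t c : R}
    (ha : a₁ - a₃ = s • ψ) (hn : n₁ - n₃ = t • ψ)
    (hc : t • a₃ + (η₁ • (φ₁ + (n₁ ⬝ᵥ φ₁) • a₁) - η₂ • (φ₂ + (n₃ ⬝ᵥ φ₂) • a₃)) = c • ψ) :
    ((1 + vecMulVec a₁ n₁) * (1 + η₁ • vecMulVec φ₁ ψ)
      - (1 + vecMulVec a₃ n₃) * (1 + η₂ • vecMulVec φ₂ ψ)).rank ≤ 1 := by
  set w := η₁ • (φ₁ + (n₁ ⬝ᵥ φ₁) • a₁) - η₂ • (φ₂ + (n₃ ⬝ᵥ φ₂) • a₃)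
  have hsplit : (1 + vecMulVec a₁ n₁) * (1 + η₁ • vecMulVec φ₁ ψ)
      - (1 + vecMulVec a₃ n₃) * (1 + η₂ • vecMulVec φ₂ ψ) = vecMulVec ψ (s • n₁ + c • ψ) :=
    calc _ = vecMulVec a₁ n₁ - vecMulVec a₃ n₃ + vecMulVec w ψ := by
          rw [one_add_vecMulVec_mul_one_add_smul_vecMulVec,
            one_add_vecMulVec_mul_one_add_smul_vecMulVec, sub_vecMulVec]
          abel
      _ = vecMulVec ψ (s • n₁) + vecMulVec (t • a₃ + w) ψ := by
          rw [vecMulVec_sub_vecMulVec_of_sub_eq_smul ha hn, add_vecMulVec, add_assoc]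
      _ = vecMulVec ψ (s • n₁ + c • ψ) := by
          rw [hc, vecMulVec_add, smul_vecMulVec, vecMulVec_smul, vecMulVec_smul]
  rw [hsplit]
  exact rank_vecMulVec_le _ _

end Matrix

theorem eq_smul_of_apply_zero_add_apply_one_eq_zero {R : Type*} [CommRing R] {v : Fin 3 → R}
    (h01 : v 0 + v 1 = 0) (h2 : v 2 = 0) : v = v 1 • ![-1, 1, 0] := by
  ext i
  fin_cases i
  · simp only [Fin.zero_eta, Pi.smul_apply, smul_eq_mul, cons_val_zero]
    linear_combination h01
  · simp
  · simp [h2]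

theorem plastic_shear_balance (μ α β γ η₁ η₂ : ℝ) (hμ : 0 < μ)
    (hα : α = (μ ^ 2 - 2) / (2 * (μ ^ 2 + 2))) (hβ : β = -2 / μ) (hγ : γ = -μ)
    (hη₁ : η₁ = (μ ^ 4 + 5 * μ ^ 3 + 4 * μ ^ 2 - 10 * μ - 12)
      / (2 * (μ ^ 4 + 5 * μ ^ 3 - 4 * μ ^ 2 + 6 * μ + 4)))
    (hη₂ : η₂ = (μ ^ 4 + μ ^ 3 - 4 * μ ^ 2 - 2 * μ + 4)
      / (2 * (μ ^ 4 + 5 * μ ^ 3 - 4 * μ ^ 2 + 6 * μ + 4))) :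
    (1 - β) * α - η₁ * (1 + (β + 2) * α) + η₂ * (1 - β * α) = 0 ∧
      (1 - β) * α * (1 - γ) + η₁ * (-2 + (β + 2) * α * (γ - 1))
        - η₂ * (2 + β * α * (1 - γ)) = 0 := by
  -- `field_simp` rewrites a polynomial denominator in Horner form and then fails to see it is
  -- nonzero, so the common denominator is made an atom first.
  generalize hD : μ ^ 4 + 5 * μ ^ 3 - 4 * μ ^ 2 + 6 * μ + 4 = D at hη₁ hη₂
  have hD0 : D ≠ 0 := by
    rw [← hD]
    nlinarith [sq_nonneg (5 * μ - 2), pow_pos hμ 3, pow_pos hμ 4]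
  subst hα hβ hγ hη₁ hη₂
  constructor
  · field_simp
    linear_combination -(μ + 2) * (μ ^ 2 - 2) * hD
  · field_simp
    linear_combination -(μ + 1) * (μ + 2) * (μ ^ 2 - 2) * hD

theorem rank_plastic_junction_le_one (μ α β γ η₁ η₂ : ℝ) (hμ : 0 < μ)
    (hα : α = (μ ^ 2 - 2) / (2 * (μ ^ 2 + 2))) (hβ : β = -2 / μ) (hγ : γ = -μ)
    (hη₁ : η₁ = (μ ^ 4 + 5 * μ ^ 3 + 4 * μ ^ 2 - 10 * μ - 12)
      / (2 * (μ ^ 4 + 5 * μ ^ 3 - 4 * μ ^ 2 + 6 * μ + 4)))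
    (hη₂ : η₂ = (μ ^ 4 + μ ^ 3 - 4 * μ ^ 2 - 2 * μ + 4)
      / (2 * (μ ^ 4 + 5 * μ ^ 3 - 4 * μ ^ 2 + 6 * μ + 4))) :
    ((1 + vecMulVec (α • ![-γ, 1, 1]) ![β, 1, 1])
        * (1 + η₁ • vecMulVec (-![1, 1, 1]) ![-1, 1, 0])
      - (1 + vecMulVec (α • ![1, -γ, 1]) ![1, β, 1])
        * (1 + η₂ • vecMulVec ![1, 1, -1] ![-1, 1, 0])).rank ≤ 1 := by
  obtain ⟨h2, h01⟩ := plastic_shear_balance μ α β γ η₁ η₂ hμ hα hβ hγ hη₁ hη₂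
  refine rank_junction_le_one (s := α * (1 + γ)) (t := 1 - β) ?_ ?_
    (eq_smul_of_apply_zero_add_apply_one_eq_zero ?_ ?_)
  · ext i
    fin_cases i <;> simp [mul_add, sub_eq_add_neg]
  · ext i
    fin_cases i <;> simp
  all_goals simp only [Pi.add_apply, Pi.sub_apply, Pi.smul_apply, Pi.neg_apply, smul_eq_mul,
    dotProduct, Fin.sum_univ_three, cons_val_zero, cons_val_one, cons_val_two, tail_cons, head_cons]
  · linear_combination h01
  · linear_combination h2

theorem Real.sqrt_mul_one_sub_one_div_sq_div_sqrt {c x : ℝ} (hc : 0 ≤ c) (hx : 1 < x) :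
    √(c * (1 - (1 / x) ^ 2)) / √(x ^ 2 - 1) = √c / x := by
  have hx0 : 0 < x := by linarith
  have hpos : 0 < x ^ 2 - 1 := by nlinarith
  rw [show c * (1 - (1 / x) ^ 2) = c * (x ^ 2 - 1) / x ^ 2 by field_simp,
    Real.sqrt_div' _ (sq_nonneg x), Real.sqrt_sq hx0.le, Real.sqrt_mul hc]
  field_simp [(Real.sqrt_pos.mpr hpos).ne']

/-- Case (a) of Theorem 6.1: the explicit shear amounts `η₁, η₂` on the slip
systems `(φ₁, ψ)`, `(φ₂, ψ)` produce a rank-one (plastic) junction between the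
martensite plates `1 + a₁⁺ ⊗ n₁⁺` and `1 + a₃⁺ ⊗ n₃⁺`. -/
theorem plastic_junction_case_a
    (lam : ℝ) (hlam : lam ∈ Set.Ioo 1 (Real.sqrt 2))
    (d α β γ : ℝ)
    (hd : d = 1 / lam)
    (hα : α = d * (lam ^ 2 - 1) / (2 * (d + lam)))
    (hβ : β = -Real.sqrt (2 * (1 - d ^ 2)) / Real.sqrt (lam ^ 2 - 1))
    (hγ : γ = -(lam / d) * Real.sqrt (2 * (1 - d ^ 2)) / Real.sqrt (lam ^ 2 - 1))
    (a₁ n₁ a₃ n₃ ψ φ₁ φ₂ : Fin 3 → ℝ)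
    (ha₁ : a₁ = α • ![-γ, 1, 1]) (hn₁ : n₁ = ![β, 1, 1])
    (ha₃ : a₃ = α • ![1, -γ, 1]) (hn₃ : n₃ = ![1, β, 1])
    (hψ : ψ = ![-1, 1, 0]) (hφ₁ : φ₁ = -![1, 1, 1]) (hφ₂ : φ₂ = ![1, 1, -1])
    (η₁ η₂ : ℝ)
    (hη₁ : η₁ = (2 * lam ^ 4 + 5 * Real.sqrt 2 * lam ^ 3 + 4 * lam ^ 2
        - 5 * Real.sqrt 2 * lam - 6)
      / (2 * (2 * lam ^ 4 + 5 * Real.sqrt 2 * lam ^ 3 - 4 * lam ^ 2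
        + 3 * Real.sqrt 2 * lam + 2)))
    (hη₂ : η₂ = (2 * lam ^ 4 + Real.sqrt 2 * lam ^ 3 - 4 * lam ^ 2
        - Real.sqrt 2 * lam + 2)
      / (2 * (2 * lam ^ 4 + 5 * Real.sqrt 2 * lam ^ 3 - 4 * lam ^ 2
        + 3 * Real.sqrt 2 * lam + 2))) :
    ((1 + vecMulVec a₁ n₁) * (1 + η₁ • vecMulVec φ₁ ψ)
      - (1 + vecMulVec a₃ n₃) * (1 + η₂ • vecMulVec φ₂ ψ)).rank ≤ 1 := by
  obtain ⟨hl1, -⟩ := hlam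
  have hl0 : 0 < lam := by linarith
  have hs : √2 ^ 2 = 2 := Real.sq_sqrt zero_le_two
  have hs3 : √2 ^ 3 = 2 * √2 := by linear_combination √2 * hs
  have hs4 : √2 ^ 4 = 4 := by linear_combination (√2 ^ 2 + 2) * hs
  have hratio := Real.sqrt_mul_one_sub_one_div_sq_div_sqrt zero_le_two hl1
  subst hd ha₁ hn₁ ha₃ hn₃ hψ hφ₁ hφ₂
  apply rank_plastic_junction_le_one (√2 * lam) α β γ η₁ η₂ (by positivity)
  · rw [hα, mul_pow, hs]
    field_simp
    ring
  · rw [hβ, neg_div, hratio]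
    field_simp
    linear_combination -hs
  · rw [hγ, mul_div_assoc, hratio]
    field_simp
  · rw [hη₁, ← mul_div_mul_left _ _ (two_ne_zero' ℝ)]
    simp only [mul_pow, hs, hs3, hs4]
    congr 1 <;> ring
  · rw [hη₂, ← mul_div_mul_left _ _ (two_ne_zero' ℝ)]
    simp only [mul_pow, hs, hs3, hs4]
    congr 1 <;> ring
end
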